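/- arXiv:2007.13995 — 3 statements merged into one kernel-verified Lean document; each statement's English description precedes it below -/
import Mathlib

section
/- The square of the generating series Σ_{l ≥ 0} h_l(x_1,…,x_n) decomposes as (Σ_l h_l)² = Σ_{λ: ℓ(λ) ≤ 2} (λ_1 - λ_2 + 1)·s_λ(x_1,…,x_n), i.e., the product h_{a}·h_{b} summed over all a,b ≥ 0 expands with the Schur polynomial s_{(λ_1,λ_2)} appearing with multiplicity λ_1 - λ_2 + 1. -/
/-!
Coefficientwise, `∑ l, h_l` is the series all of whose coefficients are `1`, so the coefficient
of `x^m` in its square counts the decompositions `m = u + v`. On the right only the partitions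
of `|m|` contribute. In degree `M`, the two-row Pieri rule
`h_a h_b = ∑_{k ≤ min(a, b)} s_{(a+b-k, k)}` is a telescoping sum of Jacobi–Trudi determinants,
and `s_{(M-k, k)}` occurs once for each `a ∈ [k, M - k]`, i.e. `M - 2k + 1` times; hence
`∑_{a+b=M} h_a h_b = ∑_{λ ⊢ M} (λ₁ - λ₂ + 1) s_λ`, which has the same coefficients.
-/

open MvPowerSeries

/-- Product topology on formal power series (coefficientwise convergence). -/
noncomputable instance {σ : Type*} : TopologicalSpace (MvPowerSeries σ ℚ) :=
  inferInstanceAs (TopologicalSpace ((σ →₀ ℕ) → ℚ))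

/-- The complete homogeneous symmetric polynomial `h_l(x_1,…,x_n)` in `ℚ[[x_1,…,x_n]]`. -/
noncomputable def hsym (n l : ℕ) : MvPowerSeries (Fin n) ℚ :=
  ∑ d ∈ Finset.Nat.antidiagonalTuple n l, ∏ i, (X i : MvPowerSeries (Fin n) ℚ) ^ d i

/-- `h_l` for an integer index, with `h_l = 0` for `l < 0`. -/
noncomputable def hsymZ (n : ℕ) (l : ℤ) : MvPowerSeries (Fin n) ℚ :=
  if l < 0 then 0 else hsym n l.toNat

/-- The Schur polynomial of a two-row partition `(λ₁, λ₂)`, via Jacobi–Trudi: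
`s_{(λ₁,λ₂)} = h_{λ₁}h_{λ₂} - h_{λ₁+1}h_{λ₂-1}`. -/
noncomputable def schur2 (n : ℕ) (l1 l2 : ℕ) : MvPowerSeries (Fin n) ℚ :=
  hsymZ n l1 * hsymZ n l2 - hsymZ n ((l1 : ℤ) + 1) * hsymZ n ((l2 : ℤ) - 1)

open Finset

section TwoRowJacobiTrudi

variable {R : Type*} [CommRing R] (H : ℤ → R)

def twoRowJacobiTrudi (l₁ l₂ : ℕ) : R :=
  H l₁ * H l₂ - H ((l₁ : ℤ) + 1) * H ((l₂ : ℤ) - 1)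

variable {H}

theorem mul_eq_sum_range_twoRowJacobiTrudi (hH : ∀ l < 0, H l = 0) (a b : ℕ) :
    H a * H b = ∑ k ∈ range (b + 1), twoRowJacobiTrudi H (a + b - k) k := by
  let g : ℕ → R := fun i => H ((a + b + 1 - i : ℕ) : ℤ) * H ((i : ℤ) - 1)
  have hg : ∀ k ∈ range (b + 1), twoRowJacobiTrudi H (a + b - k) k = g (k + 1) - g k := by
    intro k hk
    have hk : k ≤ b := Nat.lt_succ_iff.mp (mem_range.mp hk)
    simp only [twoRowJacobiTrudi, g]
    congr 3 <;> push_cast <;> omega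
  rw [sum_congr rfl hg, sum_range_sub]
  simp [g, hH]

theorem card_filter_le_fst_le_snd_antidiagonal (M k : ℕ) :
    #{p ∈ antidiagonal M | k ≤ p.1 ∧ k ≤ p.2} = M + 1 - 2 * k := by
  rw [show M + 1 - 2 * k = M + 1 - k - k by omega, ← Nat.card_Ico]
  refine card_nbij' Prod.fst (fun i => (i, M - i)) (fun p hp => ?_) (fun i hi => ?_)
    (fun p hp => ?_) (fun i hi => ?_) <;>
    simp only [coe_filter, coe_Ico, HasAntidiagonal.mem_antidiagonal, Set.mem_ofPred_eq,
      Set.mem_Ico, Prod.ext_iff, true_and] at * <;> omega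

theorem sum_antidiagonal_mul_eq_sum_twoRowJacobiTrudi (hH : ∀ l < 0, H l = 0) (M : ℕ) :
    ∑ p ∈ antidiagonal M, H p.1 * H p.2 =
      ∑ p ∈ antidiagonal M with p.2 ≤ p.1, (p.1 - p.2 + 1) • twoRowJacobiTrudi H p.1 p.2 := by
  have pieri : ∀ p ∈ antidiagonal M, H p.1 * H p.2 =
      ∑ k ∈ range (min p.1 p.2 + 1), twoRowJacobiTrudi H (M - k) k := by
    rintro ⟨a, b⟩ hab
    rw [HasAntidiagonal.mem_antidiagonal] at hab
    subst hab
    dsimp only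
    rcases le_total b a with h | h
    · rw [min_eq_right h, mul_eq_sum_range_twoRowJacobiTrudi hH]
    · rw [min_eq_left h, mul_comm, Nat.add_comm a b, mul_eq_sum_range_twoRowJacobiTrudi hH]
  calc ∑ p ∈ antidiagonal M, H p.1 * H p.2
      = ∑ p ∈ antidiagonal M, ∑ k ∈ range (min p.1 p.2 + 1),
          twoRowJacobiTrudi H (M - k) k := sum_congr rfl pieri
    _ = ∑ k ∈ range (M + 1), ∑ p ∈ antidiagonal M with k ≤ p.1 ∧ k ≤ p.2,
          twoRowJacobiTrudi H (M - k) k := by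
        refine sum_comm' fun p k => ?_
        simp only [HasAntidiagonal.mem_antidiagonal, mem_range, mem_filter]
        omega
    _ = ∑ k ∈ range (M + 1), (M + 1 - 2 * k) • twoRowJacobiTrudi H (M - k) k := by
        simp only [sum_const, card_filter_le_fst_le_snd_antidiagonal]
    _ = _ := by
        rw [sum_filter, ← Nat.sum_antidiagonal_swap, Nat.sum_antidiagonal_eq_sum_range_succ_mk]
        refine sum_congr rfl fun k hk => ?_
        simp only [Prod.swap_prod_mk]
        split_ifs with h
        · congr 1
          omega
        · rw [show M + 1 - 2 * k = 0 by omega, zero_smul]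

end TwoRowJacobiTrudi

section PowerSeries

noncomputable instance {σ : Type*} : T2Space (MvPowerSeries σ ℚ) :=
  inferInstanceAs (T2Space ((σ →₀ ℕ) → ℚ))

variable {n : ℕ}

theorem coeff_hsym (l : ℕ) (m : Fin n →₀ ℕ) :
    coeff m (hsym n l) = if m.degree = l then 1 else 0 := by
  have hmonomial : ∀ d : Fin n → ℕ,
      ∏ i, (X i : MvPowerSeries (Fin n) ℚ) ^ d i =
        monomial (Finsupp.equivFunOnFinite.symm d) 1 := by
    intro d
    rw [monomial_one_eq, Finsupp.prod_fintype _ _ (by simp)]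
    rfl
  simp only [hsym, hmonomial, map_sum, coeff_monomial, Equiv.eq_symm_apply, sum_ite_eq,
    Nat.mem_antidiagonalTuple, Finsupp.degree_eq_sum]
  rfl

theorem coeff_tsum_hsym (m : Fin n →₀ ℕ) : coeff m (∑' l, hsym n l) = 1 := by
  have hsum : HasSum (hsym n) (fun _ => 1 : (Fin n →₀ ℕ) → ℚ) := Pi.hasSum.mpr fun m => by
    have := hasSum_single (f := fun l => coeff m (hsym n l)) m.degree fun l hl => by
      rw [coeff_hsym, if_neg (Ne.symm hl)]
    rw [coeff_hsym, if_pos rfl] at this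
    exact this
  rw [hsum.tsum_eq]
  rfl

theorem coeff_sq_tsum_hsym (m : Fin n →₀ ℕ) :
    coeff m ((∑' l, hsym n l) ^ 2) = (#(antidiagonal m) : ℚ) := by
  simp [sq, coeff_mul, coeff_tsum_hsym]

theorem coeff_hsymZ (l : ℤ) (m : Fin n →₀ ℕ) :
    coeff m (hsymZ n l) = if (m.degree : ℤ) = l then 1 else 0 := by
  unfold hsymZ
  split_ifs
  · omega
  · rfl
  · rw [coeff_hsym, if_pos (by omega)]
  · rw [coeff_hsym, if_neg (by omega)]

theorem coeff_hsymZ_mul_hsymZ_of_add_ne {x y : ℤ} {m : Fin n →₀ ℕ} (h : x + y ≠ m.degree) :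
    coeff m (hsymZ n x * hsymZ n y) = 0 := by
  rw [coeff_mul]
  refine sum_eq_zero fun p hp => ?_
  have hdeg : p.1.degree + p.2.degree = m.degree := by
    rw [← map_add, (HasAntidiagonal.mem_antidiagonal.mp hp)]
  simp only [coeff_hsymZ, mul_ite, mul_one, mul_zero]
  split_ifs
  · exact absurd (by omega) h
  all_goals rfl

theorem coeff_schur2_of_add_ne {a b : ℕ} {m : Fin n →₀ ℕ} (h : a + b ≠ m.degree) :
    coeff m (schur2 n a b) = 0 := by
  rw [schur2, map_sub, coeff_hsymZ_mul_hsymZ_of_add_ne (by omega),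
    coeff_hsymZ_mul_hsymZ_of_add_ne (by omega), sub_zero]

theorem coeff_sum_antidiagonal_hsymZ_mul (m : Fin n →₀ ℕ) :
    coeff m (∑ p ∈ antidiagonal m.degree, hsymZ n p.1 * hsymZ n p.2) = #(antidiagonal m) := by
  rw [map_sum]
  simp only [coeff_mul, coeff_hsymZ]
  rw [sum_comm, card_eq_sum_ones, Nat.cast_sum, Nat.cast_one]
  refine sum_congr rfl fun q hq => ?_
  rw [sum_eq_single (q.1.degree, q.2.degree)]
  · simp
  · rintro p - hp
    simp only [Nat.cast_inj]
    split_ifs with h₁ h₂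
    · exact absurd (Prod.ext h₁.symm h₂.symm) hp
    all_goals simp
  · intro h
    refine absurd (HasAntidiagonal.mem_antidiagonal.mpr ?_) h
    rw [← map_add, HasAntidiagonal.mem_antidiagonal.mp hq]

theorem hasSum_coeff_smul_schur2 (m : Fin n →₀ ℕ) :
    HasSum (fun p : {p : ℕ × ℕ // p.2 ≤ p.1} =>
      coeff m ((p.1.1 - p.1.2 + 1 : ℚ) • schur2 n p.1.1 p.1.2)) (#(antidiagonal m) : ℚ) := by
  have hsupport : ∀ p ∉ (antidiagonal m.degree).subtype (fun p : ℕ × ℕ => p.2 ≤ p.1),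
      coeff m ((p.1.1 - p.1.2 + 1 : ℚ) • schur2 n p.1.1 p.1.2) = 0 := by
    intro p hp
    rw [coeff_smul, coeff_schur2_of_add_ne, mul_zero]
    simpa [p.2] using hp
  convert hasSum_sum_of_ne_finset_zero (L := .unconditional _) hsupport using 1
  rw [sum_subtype_eq_sum_filter
      (f := fun p : ℕ × ℕ => coeff m ((p.1 - p.2 + 1 : ℚ) • schur2 n p.1 p.2)),
    ← map_sum, ← coeff_sum_antidiagonal_hsymZ_mul,
    sum_antidiagonal_mul_eq_sum_twoRowJacobiTrudi (H := hsymZ n) (fun l hl => if_pos hl)]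
  refine congrArg _ (sum_congr rfl fun p hp => ?_)
  rw [← Nat.cast_smul_eq_nsmul ℚ, Nat.cast_add, Nat.cast_sub (mem_filter.mp hp).2, Nat.cast_one]
  rfl

end PowerSeries

/-- `(Σ_{l ≥ 0} h_l)² = Σ_{λ = (λ₁ ≥ λ₂ ≥ 0)} (λ₁ - λ₂ + 1)·s_λ`,
the sum on the right running over all partitions with at most two parts. -/
theorem sq_tsum_hsym (n : ℕ) :
    (∑' l : ℕ, hsym n l) ^ 2 =
      ∑' p : {p : ℕ × ℕ // p.2 ≤ p.1},
        ((p.1.1 - p.1.2 + 1 : ℚ)) • schur2 n p.1.1 p.1.2 := by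
  refine (Pi.hasSum.mpr fun m => ?_).tsum_eq.symm
  have := hasSum_coeff_smul_schur2 (n := n) m
  rw [← coeff_sq_tsum_hsym] at this
  exact this
end

section
/- For each l ∈ ℤ_{≥0} and 0 ≤ k ≤ l, the coefficient q^{k(k-l+1)}·[l choose k]^{-1} lies in q^k(1 + qA₀), where A₀ is the subring of ℚ(q) of rational functions regular at q = 0. -/
noncomputable abbrev Kq : Type := RatFunc ℚ
noncomputable abbrev q : Kq := RatFunc.X

/-- The balanced q-integer `[m] = (q^m - q^{-m})/(q - q^{-1})`. -/
noncomputable def qInt (m : ℕ) : Kq :=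
  (q ^ m - q⁻¹ ^ m) / (q - q⁻¹)

/-- The q-factorial `[m]!`. -/
noncomputable def qFac (m : ℕ) : Kq :=
  ∏ k ∈ Finset.range m, qInt (k + 1)

/-- The q-binomial `[m choose k] = [m]!/([k]![m-k]!)`. -/
noncomputable def qBinom (m k : ℕ) : Kq :=
  qFac m / (qFac k * qFac (m - k))

/-- `A₀`: the subring of ℚ(q) of rational functions regular at `q = 0`. -/
def regAtZero : Set Kq := {f : Kq | Polynomial.eval 0 f.denom ≠ 0}

/-!
Since `q ^ j * [j + 1] = 1 + q² + ⋯ + q^{2j}`, multiplying `[m]!` by `q ^ e(m)`, where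
`e(m) = 0 + 1 + ⋯ + (m - 1)`, gives a polynomial with constant term `1`. As
`e(k + d) = e(k) + e(d) + k d`, the coefficient for `l = k + d` is `q ^ k` times a quotient of
two polynomials with constant term `1`, and such a quotient lies in `1 + q A₀`.
-/

open Polynomial Finset

lemma algebraMap_div_mem_regAtZero {p s : ℚ[X]} (hs : s.eval 0 ≠ 0) :
    algebraMap ℚ[X] Kq p / algebraMap ℚ[X] Kq s ∈ regAtZero := by
  intro hden
  have hX : X ∣ (algebraMap ℚ[X] Kq p / algebraMap ℚ[X] Kq s).denom := by
    rwa [X_dvd_iff, coeff_zero_eq_eval_zero]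
  refine hs ?_
  rw [← coeff_zero_eq_eval_zero, ← X_dvd_iff]
  exact hX.trans (RatFunc.denom_div_dvd p s)

lemma exists_algebraMap_div_eq_one_add_q_mul {p s : ℚ[X]} (hs : s.eval 0 ≠ 0)
    (hps : p.eval 0 = s.eval 0) :
    ∃ a ∈ regAtZero, algebraMap ℚ[X] Kq p / algebraMap ℚ[X] Kq s = 1 + q * a := by
  obtain ⟨r, hr⟩ : X ∣ p - s := by
    rw [X_dvd_iff, coeff_zero_eq_eval_zero, eval_sub, hps, sub_self]
  refine ⟨algebraMap ℚ[X] Kq r / algebraMap ℚ[X] Kq s, algebraMap_div_mem_regAtZero hs, ?_⟩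
  have hs' : algebraMap ℚ[X] Kq s ≠ 0 :=
    RatFunc.algebraMap_ne_zero fun h => hs (by rw [h, eval_zero])
  rw [eq_add_of_sub_eq' hr, map_add, map_mul, RatFunc.algebraMap_X]
  field_simp

lemma q_ne_zero : q ≠ 0 := RatFunc.X_ne_zero

lemma q_sq_ne_one : q ^ 2 ≠ 1 := by
  intro h
  have : (X ^ 2 : ℚ[X]) = 1 := RatFunc.algebraMap_injective ℚ (by simpa using h)
  simpa using congrArg (eval 0) this

lemma q_pow_mul_qInt_succ (m : ℕ) : q ^ m * qInt (m + 1) = ∑ i ∈ range (m + 1), (q ^ 2) ^ i := by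
  rw [geom_sum_eq q_sq_ne_one, qInt, inv_pow]
  field_simp [q_ne_zero]
  ring

noncomputable def qFacPoly (m : ℕ) : ℚ[X] :=
  ∏ j ∈ range m, ∑ i ∈ range (j + 1), (X ^ 2) ^ i

lemma eval_zero_qFacPoly (m : ℕ) : (qFacPoly m).eval 0 = 1 := by
  simp [qFacPoly, eval_prod, eval_finsetSum]

lemma q_pow_mul_qFac (m : ℕ) :
    q ^ (∑ i ∈ range m, i) * qFac m = algebraMap ℚ[X] Kq (qFacPoly m) := by
  simp only [qFac, qFacPoly, ← prod_pow_eq_pow_sum, ← prod_mul_distrib, q_pow_mul_qInt_succ,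
    map_prod, map_sum, map_pow, RatFunc.algebraMap_X]

lemma qFac_ne_zero (m : ℕ) : qFac m ≠ 0 := by
  intro h
  have := q_pow_mul_qFac m
  rw [h, mul_zero, eq_comm, map_eq_zero_iff _ (RatFunc.algebraMap_injective ℚ)] at this
  simpa [eval_zero_qFacPoly] using congrArg (eval 0) this

lemma sum_range_id_add (k d : ℕ) :
    ∑ i ∈ range (k + d), i = ∑ i ∈ range k, i + ∑ i ∈ range d, i + k * d := by
  rw [sum_range_add, sum_add_distrib, sum_const, card_range, smul_eq_mul]
  ring

/-- for `l ∈ ℤ_{≥0}` and `0 ≤ k ≤ l`,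
`q^{k(k-l+1)}·[l choose k]⁻¹ ∈ q^k(1 + qA₀)`. -/
theorem coeff_mem_qk_one_add_qA0 (l k : ℕ) (hk : k ≤ l) :
    ∃ a ∈ regAtZero,
      q ^ ((k : ℤ) * ((k : ℤ) - l + 1)) * (qBinom l k)⁻¹ = q ^ k * (1 + q * a) := by
  obtain ⟨d, rfl⟩ := Nat.exists_eq_add_of_le hk
  obtain ⟨a, ha, hu⟩ := exists_algebraMap_div_eq_one_add_q_mul
    (p := qFacPoly k * qFacPoly d) (s := qFacPoly (k + d))
    (by simp [eval_zero_qFacPoly]) (by simp [eval_zero_qFacPoly])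
  refine ⟨a, ha, ?_⟩
  have hexp : (k : ℤ) * (k - (k + d : ℕ) + 1) = (k : ℕ) - (k * d : ℕ) := by push_cast; ring
  rw [← hu, map_mul, ← q_pow_mul_qFac, ← q_pow_mul_qFac, ← q_pow_mul_qFac, sum_range_id_add,
    qBinom, Nat.add_sub_cancel_left, hexp, zpow_sub₀ q_ne_zero, zpow_natCast, zpow_natCast]
  field_simp [qFac_ne_zero, q_ne_zero]
  ring
end

section
/- The operators on W = ⊕_{m ∈ ℤ_{≥0}^n} ℚ(q)|m⟩ defined by e_0|m⟩ = q^{-1}([m_1+1][m_1+2]/[2])|m + 2e_1⟩, f_0|m⟩ = -(q/[2])|m - 2e_1⟩, k_0|m⟩ = q^{2m_1+1}|m⟩ satisfy e_0 f_0 - f_0 e_0 = (k_0 - k_0^{-1})/(q² - q^{-2}). -/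
/-- The ℚ(q)-vector space `W` with basis `|m⟩`, `m ∈ ℤ_{≥0}^n`. -/
noncomputable abbrev W (n : ℕ) : Type := (Fin n → ℕ) →₀ Kq

/-- The basis vector `|m⟩`. -/
noncomputable def ket {n : ℕ} (m : Fin n → ℕ) : W n := Finsupp.single m 1

/-- Extension of a map defined on basis vectors to an operator on `W`. -/
noncomputable def opOf {n : ℕ} (g : (Fin n → ℕ) → W n) : W n → W n :=
  fun v => v.sum fun m c => c • g m

/-- `e_0 |m⟩ = q^{-1}([m_1+1][m_1+2]/[2]) |m + 2e_1⟩`. -/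
noncomputable def e0 {n : ℕ} (j : Fin n) : W n → W n :=
  opOf fun m =>
    (q⁻¹ * (qInt (m j + 1) * qInt (m j + 2) / qInt 2)) •
      ket (Function.update m j (m j + 2))

/-- `f_0 |m⟩ = -(q/[2]) |m - 2e_1⟩` (zero if `m_1 < 2`). -/
noncomputable def f0 {n : ℕ} (j : Fin n) : W n → W n :=
  opOf fun m =>
    if m j < 2 then 0 else (-(q / qInt 2)) • ket (Function.update m j (m j - 2))

/-- `k_0 |m⟩ = q^{2m_1+1} |m⟩`. -/
noncomputable def k0 {n : ℕ} (j : Fin n) : W n → W n :=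
  opOf fun m => (q ^ (2 * m j + 1)) • ket m

/-- `k_0⁻¹ |m⟩ = q^{-2m_1-1} |m⟩`. -/
noncomputable def k0Inv {n : ℕ} (j : Fin n) : W n → W n :=
  opOf fun m => (q ^ (-(2 * (m j : ℤ) + 1))) • ket m

/-- The numerator of the q-integer identity `[a+1][a+2] - [a-1][a] = [2][2a+1]`. -/
theorem pow_sub_inv_pow_mul_sub_mul_eq {K : Type*} [Field K] (t : K) (a : ℕ) :
    (t ^ (a + 1) - t⁻¹ ^ (a + 1)) * (t ^ (a + 2) - t⁻¹ ^ (a + 2)) -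
        (t ^ (a - 1) - t⁻¹ ^ (a - 1)) * (t ^ a - t⁻¹ ^ a) =
      (t ^ 2 - t⁻¹ ^ 2) * (t ^ (2 * a + 1) - t⁻¹ ^ (2 * a + 1)) := by
  rcases eq_or_ne t 0 with rfl | ht
  · simp
  rcases a with _ | b
  · ring
  · simp only [Nat.add_sub_cancel, inv_pow]
    field_simp
    ring

theorem qInt_zero : qInt 0 = 0 := by simp [qInt]

theorem qInt_mul_sub_qInt_mul (a : ℕ) :
    qInt (a + 1) * qInt (a + 2) - qInt (a - 1) * qInt a = qInt 2 * qInt (2 * a + 1) := by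
  simp only [qInt, div_mul_div_comm, ← sub_div, pow_sub_inv_pow_mul_sub_mul_eq]

theorem q_pow_four_ne_one : q ^ 4 ≠ 1 := fun h =>
  (RatFunc.transcendental_X (K := ℚ)) ⟨Polynomial.X ^ 4 - Polynomial.C 1,
    Polynomial.X_pow_sub_C_ne_zero (by norm_num) 1, by simp [h]⟩

theorem q_sq_sub_inv_sq_ne_zero : q ^ 2 - q⁻¹ ^ 2 ≠ 0 := by
  have hq : q ≠ 0 := RatFunc.X_ne_zero
  have h : q ^ 2 * (q ^ 2 - q⁻¹ ^ 2) = q ^ 4 - 1 := by field_simp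
  exact fun h0 => q_pow_four_ne_one (sub_eq_zero.1 (by rw [← h, h0, mul_zero]))

theorem q_sub_inv_ne_zero : q - q⁻¹ ≠ 0 := fun h =>
  q_sq_sub_inv_sq_ne_zero (by rw [show q ^ 2 - q⁻¹ ^ 2 = (q - q⁻¹) * (q + q⁻¹) by ring, h, zero_mul])

theorem qInt_two_ne_zero : qInt 2 ≠ 0 := by
  rw [qInt]
  exact div_ne_zero q_sq_sub_inv_sq_ne_zero q_sub_inv_ne_zero

theorem q_sq_sub_inv_sq_inv_mul (a : ℕ) :
    (q ^ 2 - q ^ (-2 : ℤ))⁻¹ * (q ^ (2 * a + 1) - q ^ (-(2 * (a : ℤ) + 1))) =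
      qInt (2 * a + 1) / qInt 2 := by
  have h2 : q ^ (-2 : ℤ) = q⁻¹ ^ 2 := by rw [zpow_neg, inv_pow]; norm_cast
  have ha : q ^ (-(2 * (a : ℤ) + 1)) = q⁻¹ ^ (2 * a + 1) := by
    rw [zpow_neg, inv_pow]; norm_cast
  rw [h2, ha, qInt, qInt, div_div_div_cancel_right₀ q_sub_inv_ne_zero, inv_mul_eq_div]

theorem commutator_coeff (a : ℕ) :
    -(q / qInt 2) * (q⁻¹ * (qInt (a - 1) * qInt a / qInt 2)) -
        q⁻¹ * (qInt (a + 1) * qInt (a + 2) / qInt 2) * -(q / qInt 2) =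
      (q ^ 2 - q ^ (-2 : ℤ))⁻¹ * (q ^ (2 * a + 1) - q ^ (-(2 * (a : ℤ) + 1))) := by
  have hq : q ≠ 0 := RatFunc.X_ne_zero
  have h2 := qInt_two_ne_zero
  have key := qInt_mul_sub_qInt_mul a
  rw [q_sq_sub_inv_sq_inv_mul]
  field_simp
  linear_combination key

section Operators

variable {n : ℕ} (j : Fin n)

theorem opOf_ket (g : (Fin n → ℕ) → W n) (m : Fin n → ℕ) : opOf g (ket m) = g m :=
  (Finsupp.linearCombination_single Kq (v := g) 1 m).trans (one_smul Kq (g m))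

theorem opOf_smul (g : (Fin n → ℕ) → W n) (c : Kq) (v : W n) : opOf g (c • v) = c • opOf g v :=
  map_smul (Finsupp.linearCombination Kq g) c v

theorem opOf_commutator_of_ket {e f k k' : (Fin n → ℕ) → W n} {c : Kq}
    (h : ∀ m, opOf e (opOf f (ket m)) - opOf f (opOf e (ket m)) =
      c • (opOf k (ket m) - opOf k' (ket m))) (v : W n) :
    opOf e (opOf f v) - opOf f (opOf e v) = c • (opOf k v - opOf k' v) := by
  have key : Finsupp.linearCombination Kq e ∘ₗ Finsupp.linearCombination Kq f -
      Finsupp.linearCombination Kq f ∘ₗ Finsupp.linearCombination Kq e =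
      c • (Finsupp.linearCombination Kq k - Finsupp.linearCombination Kq k') :=
    Finsupp.lhom_ext' fun m => LinearMap.ext_ring (h m)
  exact LinearMap.congr_fun key v

theorem e0_f0_ket (m : Fin n → ℕ) :
    e0 j (f0 j (ket m)) =
      (-(q / qInt 2) * (q⁻¹ * (qInt (m j - 1) * qInt (m j) / qInt 2))) • ket m := by
  rw [f0, opOf_ket]
  split_ifs with hlt
  · rcases (by omega : m j = 0 ∨ m j = 1) with h | h <;> simp [h, qInt_zero, e0, opOf]
  · obtain ⟨b, hb⟩ : ∃ b, m j = b + 2 := ⟨m j - 2, by omega⟩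
    have hupd : Function.update m j (b + 2) = m := hb ▸ Function.update_eq_self j m
    rw [e0, opOf_smul, opOf_ket, smul_smul]
    simp [hb, hupd]

theorem f0_e0_ket (m : Fin n → ℕ) :
    f0 j (e0 j (ket m)) =
      (q⁻¹ * (qInt (m j + 1) * qInt (m j + 2) / qInt 2) * -(q / qInt 2)) • ket m := by
  rw [e0, opOf_ket, f0, opOf_smul, opOf_ket, if_neg (by simp), smul_smul]
  simp

theorem e0_f0_sub_f0_e0_ket (m : Fin n → ℕ) :
    e0 j (f0 j (ket m)) - f0 j (e0 j (ket m)) =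
      (q ^ 2 - q ^ (-2 : ℤ))⁻¹ • (k0 j (ket m) - k0Inv j (ket m)) := by
  rw [e0_f0_ket, f0_e0_ket, k0, k0Inv, opOf_ket, opOf_ket, ← sub_smul, ← sub_smul, smul_smul,
    commutator_coeff]

end Operators

/-- the node-0 operators of the level-one q-oscillator representation
of `U_q(C_n^{(1)})` satisfy `e_0 f_0 - f_0 e_0 = (k_0 - k_0^{-1})/(q² - q^{-2})` on `W`. -/
theorem sl2_relation_node_zero (n : ℕ) (hn : 0 < n) (v : W n) :
    e0 ⟨0, hn⟩ (f0 ⟨0, hn⟩ v) - f0 ⟨0, hn⟩ (e0 ⟨0, hn⟩ v) =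
      ((q ^ 2 - q ^ (-2 : ℤ))⁻¹ : Kq) • (k0 ⟨0, hn⟩ v - k0Inv ⟨0, hn⟩ v) :=
  opOf_commutator_of_ket (e0_f0_sub_f0_e0_ket ⟨0, hn⟩) v
end
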